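/- The BiSample-MD mechanism satisfies ε-local differential privacy on the extended input domain [−1,1] ∪ {⊥}: for any two inputs t1, t2 (including ⊥) and any output (s,b), Pr[M(t1)=(s,b)] ≤ e^ε · Pr[M(t2)=(s,b)]. -/

import Mathlib

/-! For every input the probability of `b = 1` lies in `[1/(e^ε+1), e^ε/(e^ε+1)]`, an interval
symmetric about `1/2`, so the probability of `b = 0` does too. Hence every output probability lies
in `[1/(2(e^ε+1)), e^ε/(2(e^ε+1))]`, whose endpoints have ratio exactly `e^ε`. -/

open Real

/-- Output distribution of BiSample-MD on the extended input domain
`[−1,1] ∪ {⊥}` (modeled by `Option ℝ`, `none = ⊥`): choose `s` uniformly;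
for a real input `v`, `b = 1` w.p. `((1−e^ε)/(1+e^ε))·(v/2)+1/2` if `s = 0`
and w.p. `((e^ε−1)/(e^ε+1))·(v/2)+1/2` if `s = 1`; for input `⊥`, `b = 1`
w.p. `1/(e^ε+1)` regardless of `s`. -/
noncomputable def biSampleMDProb (ε : ℝ) (t : Option ℝ) : Bool × Bool → ℝ
  | (s, b) =>
    let g := match t with
      | some v => if s then (exp ε - 1) / (exp ε + 1) * (v / 2) + 1 / 2
                  else (1 - exp ε) / (1 + exp ε) * (v / 2) + 1 / 2
      | none => 1 / (exp ε + 1)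
    1 / 2 * (if b then g else 1 - g)

section BitProbability

variable {e : ℝ}

lemma one_div_add_one_mem_Icc (he : 1 ≤ e) : 1 / (e + 1) ∈ Set.Icc (1 / (e + 1)) (e / (e + 1)) :=
  ⟨le_rfl, div_le_div_of_nonneg_right he (by linarith)⟩

lemma affine_mem_Icc {v : ℝ} (he : 1 ≤ e) (hv : v ∈ Set.Icc (-1 : ℝ) 1) :
    (e - 1) / (e + 1) * (v / 2) + 1 / 2 ∈ Set.Icc (1 / (e + 1)) (e / (e + 1)) := by
  obtain ⟨hv₁, hv₂⟩ := hv
  have hpos : 0 < e + 1 := by linarith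
  constructor
  · rw [div_le_iff₀ hpos]
    field_simp
    nlinarith
  · rw [le_div_iff₀ hpos]
    field_simp
    nlinarith

lemma one_sub_mem_Icc {x : ℝ} (he : e + 1 ≠ 0) (hx : x ∈ Set.Icc (1 / (e + 1)) (e / (e + 1))) :
    1 - x ∈ Set.Icc (1 / (e + 1)) (e / (e + 1)) := by
  have hsum : 1 / (e + 1) + e / (e + 1) = 1 := by field_simp; ring
  obtain ⟨hx₁, hx₂⟩ := hx
  constructor <;> linarith

lemma half_ite_mem_Icc (he : e + 1 ≠ 0) {x : ℝ} (hx : x ∈ Set.Icc (1 / (e + 1)) (e / (e + 1)))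
    (b : Bool) :
    1 / 2 * (if b then x else 1 - x) ∈ Set.Icc (1 / (2 * (e + 1))) (e / (2 * (e + 1))) := by
  have hbit : (if b then x else 1 - x) ∈ Set.Icc (1 / (e + 1)) (e / (e + 1)) := by
    cases b
    · exact one_sub_mem_Icc he hx
    · exact hx
  obtain ⟨h₁, h₂⟩ := hbit
  constructor
  · calc 1 / (2 * (e + 1)) = 1 / 2 * (1 / (e + 1)) := (one_div_mul_one_div 2 (e + 1)).symm
      _ ≤ _ := by gcongr
  · calc 1 / 2 * (if b then x else 1 - x) ≤ 1 / 2 * (e / (e + 1)) := by gcongr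
      _ = e / (2 * (e + 1)) := by rw [div_mul_div_comm, one_mul]

end BitProbability

lemma biSampleMDProb_mem_Icc {ε : ℝ} (hε : 0 ≤ ε) {t : Option ℝ}
    (ht : ∀ v ∈ t, v ∈ Set.Icc (-1 : ℝ) 1) (o : Bool × Bool) :
    biSampleMDProb ε t o ∈ Set.Icc (1 / (2 * (exp ε + 1))) (exp ε / (2 * (exp ε + 1))) := by
  have he : 1 ≤ exp ε := one_le_exp hε
  have he' : exp ε + 1 ≠ 0 := by positivity
  obtain ⟨s, b⟩ := o
  rcases t with _ | v
  · exact half_ite_mem_Icc he' (one_div_add_one_mem_Icc he) b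
  obtain ⟨hv₁, hv₂⟩ := ht v rfl
  cases s
  · have hflip : (1 - exp ε) / (1 + exp ε) * (v / 2) + 1 / 2
        = (exp ε - 1) / (exp ε + 1) * (-v / 2) + 1 / 2 := by ring
    have hneg : -v ∈ Set.Icc (-1 : ℝ) 1 := ⟨by linarith, by linarith⟩
    have hg := affine_mem_Icc he hneg
    rw [← hflip] at hg
    exact half_ite_mem_Icc he' hg b
  · exact half_ite_mem_Icc he' (affine_mem_Icc he ⟨hv₁, hv₂⟩) b

/-- The BiSample-MD mechanism satisfies ε-local differential privacy on
`[−1,1] ∪ {⊥}`. -/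
theorem biSampleMD_ldp (ε : ℝ) (hε : 0 < ε) (t1 t2 : Option ℝ)
    (ht1 : ∀ v ∈ t1, v ∈ Set.Icc (-1 : ℝ) 1)
    (ht2 : ∀ v ∈ t2, v ∈ Set.Icc (-1 : ℝ) 1)
    (o : Bool × Bool) :
    biSampleMDProb ε t1 o ≤ exp ε * biSampleMDProb ε t2 o :=
  calc biSampleMDProb ε t1 o ≤ exp ε / (2 * (exp ε + 1)) := (biSampleMDProb_mem_Icc hε.le ht1 o).2
    _ = exp ε * (1 / (2 * (exp ε + 1))) := by ring
    _ ≤ exp ε * biSampleMDProb ε t2 o := by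
      gcongr
      exact (biSampleMDProb_mem_Icc hε.le ht2 o).1
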